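/- arXiv:2005.02012 — 5 statements merged into one kernel-verified Lean document; each statement's English description precedes it below -/
import Mathlib

section
/- Proposition 5.2 (duality for analytic curves not supported by a line). Let U ⊆ ℂ be a nonempty connected open set and let γ : U → ℂ² be a complex analytic map with γ′(s) ≠ 0 for every s ∈ U. Assume the image γ(U) is not contained in any complex affine line of ℂ². Then for every point P ∈ ℂ², the set of parameters s ∈ U such that P lies on the tangent line to γ at s — that is, the set { s ∈ U : ∃ c ∈ ℂ, P = γ(s) + c•γ′(s) } — is countable. -/
/-! The tangent line at `s` passes through `P` exactly when `cross (γ s - P) (γ' s) = 0`, and this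
determinant is analytic in `s`, so its zeros are countable unless it vanishes on all of `U`. In that
case, for `s₀` with `γ s₀ ≠ P`, the coordinates `b = cross (γ - P) (γ s₀ - P)` and
`a = cross (γ - P) u` (with `a s₀ ≠ 0`) have vanishing Wronskian by the Plücker relation, so `b / a`
is locally constant, equal to `0`; by the identity theorem `b ≡ 0` on `U`, i.e. `γ(U)` lies on the
line through `P` and `γ s₀`. -/

open Topology Set

def cross {R : Type*} [CommRing R] (x y : R × R) : R := x.1 * y.2 - x.2 * y.1

section Algebra

variable {R : Type*} [CommRing R]

@[simp]
lemma cross_zero_right (x : R × R) : cross x 0 = 0 := by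
  simp [cross]

lemma cross_smul_left_self (c : R) (y : R × R) : cross (c • y) y = 0 := by
  simp only [cross, Prod.smul_fst, Prod.smul_snd, smul_eq_mul]
  ring

lemma cross_mul_cross_sub_cross_mul_cross (x y z t : R × R) :
    cross x z * cross y t - cross x t * cross y z = cross x y * cross z t := by
  simp only [cross]
  ring

variable {K : Type*} [Field K] {w : K × K}

lemma exists_cross_ne_zero (hw : w ≠ 0) : ∃ u : K × K, cross w u ≠ 0 := by
  by_cases h₁ : w.1 = 0
  · have h₂ : w.2 ≠ 0 := fun h₂ ↦ hw (Prod.ext h₁ h₂)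
    exact ⟨(1, 0), by simpa [cross] using h₂⟩
  · exact ⟨(0, 1), by simpa [cross] using h₁⟩

lemma exists_eq_smul_of_cross_eq_zero {x : K × K} (hw : w ≠ 0) (h : cross x w = 0) :
    ∃ c : K, x = c • w := by
  simp only [cross] at h
  by_cases h₁ : w.1 = 0
  · have h₂ : w.2 ≠ 0 := fun h₂ ↦ hw (Prod.ext h₁ h₂)
    refine ⟨x.2 / w.2, Prod.ext ?_ ?_⟩ <;> simp only [Prod.smul_fst, Prod.smul_snd, smul_eq_mul]
    · simpa [h₁, h₂] using h
    · field_simp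
  · refine ⟨x.1 / w.1, Prod.ext ?_ ?_⟩ <;> simp only [Prod.smul_fst, Prod.smul_snd, smul_eq_mul]
    · field_simp
    · field_simp
      linear_combination -h

end Algebra

section Calculus

variable {𝕜 : Type*} [NontriviallyNormedField 𝕜] {U : Set 𝕜}

lemma HasDerivAt.cross {f g : 𝕜 → 𝕜 × 𝕜} {f' g' : 𝕜 × 𝕜} {s : 𝕜}
    (hf : HasDerivAt f f' s) (hg : HasDerivAt g g' s) :
    HasDerivAt (fun t ↦ cross (f t) (g t)) (cross f' (g s) + cross (f s) g') s := by
  have fst {h : 𝕜 → 𝕜 × 𝕜} {h'} (hh : HasDerivAt h h' s) : HasDerivAt (fun t ↦ (h t).1) h'.1 s :=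
    (ContinuousLinearMap.fst 𝕜 𝕜 𝕜).hasFDerivAt.comp_hasDerivAt s hh
  have snd {h : 𝕜 → 𝕜 × 𝕜} {h'} (hh : HasDerivAt h h' s) : HasDerivAt (fun t ↦ (h t).2) h'.2 s :=
    (ContinuousLinearMap.snd 𝕜 𝕜 𝕜).hasFDerivAt.comp_hasDerivAt s hh
  exact (((fst hf).mul (snd hg)).sub ((snd hf).mul (fst hg))).congr_deriv
    (by simp only [_root_.cross]; ring)

lemma AnalyticOnNhd.cross {f g : 𝕜 → 𝕜 × 𝕜} (hf : AnalyticOnNhd 𝕜 f U)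
    (hg : AnalyticOnNhd 𝕜 g U) : AnalyticOnNhd 𝕜 (fun t ↦ cross (f t) (g t)) U := by
  have fst {h : 𝕜 → 𝕜 × 𝕜} (hh : AnalyticOnNhd 𝕜 h U) : AnalyticOnNhd 𝕜 (fun t ↦ (h t).1) U :=
    (ContinuousLinearMap.fst 𝕜 𝕜 𝕜).comp_analyticOnNhd hh
  have snd {h : 𝕜 → 𝕜 × 𝕜} (hh : AnalyticOnNhd 𝕜 h U) : AnalyticOnNhd 𝕜 (fun t ↦ (h t).2) U :=
    (ContinuousLinearMap.snd 𝕜 𝕜 𝕜).comp_analyticOnNhd hh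
  exact ((fst hf).mul (snd hg)).sub ((snd hf).mul (fst hg))

theorem AnalyticOnNhd.countable_zeros [SecondCountableTopology 𝕜] {E : Type*}
    [NormedAddCommGroup E] [NormedSpace 𝕜 E] {f : 𝕜 → E} (hf : AnalyticOnNhd 𝕜 f U)
    (hU : IsPreconnected U) (h : ¬EqOn f 0 U) : {s ∈ U | f s = 0}.Countable := by
  have hne := (hf.eqOn_zero_or_eventually_ne_zero_of_preconnected hU).resolve_left h
  have hdisc : IsDiscrete ({s | f s = 0} ∩ U) := isDiscrete_of_codiscreteWithin hne
  rw [inter_comm] at hdisc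
  exact (HereditarilyLindelofSpace.isLindelof _).countable_of_isDiscrete hdisc

end Calculus

section Wronskian

variable {𝕜 : Type*} [RCLike 𝕜] {U : Set 𝕜} {s₀ : 𝕜}

theorem AnalyticOnNhd.eqOn_zero_of_deriv_mul_eq_mul_deriv {f g : 𝕜 → 𝕜}
    (hU : IsOpen U) (hUc : IsPreconnected U) (hf : AnalyticOnNhd 𝕜 f U)
    (hg : DifferentiableOn 𝕜 g U) (hfg : ∀ s ∈ U, deriv f s * g s = f s * deriv g s)
    (hs₀ : s₀ ∈ U) (hf₀ : f s₀ = 0) (hg₀ : g s₀ ≠ 0) : EqOn f 0 U := by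
  obtain ⟨ε, hε, hball⟩ : ∃ ε > 0, Metric.ball s₀ ε ⊆ U ∩ g ⁻¹' {0}ᶜ :=
    Metric.isOpen_iff.mp (hg.continuousOn.isOpen_inter_preimage hU isOpen_compl_singleton)
      s₀ ⟨hs₀, hg₀⟩
  have hderiv : ∀ s ∈ Metric.ball s₀ ε, HasDerivAt (f / g) 0 s := by
    intro s hs
    obtain ⟨hsU, hgs⟩ := hball hs
    have hfd := (hf s hsU).differentiableAt.hasDerivAt
    have hgd := (hg.differentiableAt (hU.mem_nhds hsU)).hasDerivAt
    simpa [hfg s hsU] using hfd.div hgd hgs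
  have hquot : ∀ s ∈ Metric.ball s₀ ε, (f / g) s = (f / g) s₀ := fun s hs ↦
    Metric.isOpen_ball.is_const_of_deriv_eq_zero (convex_ball s₀ ε).isPreconnected
      (fun t ht ↦ (hderiv t ht).differentiableAt.differentiableWithinAt)
      (fun t ht ↦ (hderiv t ht).deriv) hs (Metric.mem_ball_self hε)
  have hnear : ∀ᶠ s in 𝓝 s₀, f s = 0 := by
    filter_upwards [Metric.ball_mem_nhds s₀ hε] with s hs
    have hgs : g s ≠ 0 := (hball hs).2
    simpa [hf₀, hgs] using hquot s hs
  exact hf.eqOn_zero_of_preconnected_of_frequently_eq_zero hUc hs₀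
    (hnear.filter_mono nhdsWithin_le_nhds).frequently

theorem exists_forall_eq_smul_of_cross_deriv_eq_zero {v : 𝕜 → 𝕜 × 𝕜} (hU : IsOpen U)
    (hUc : IsPreconnected U) (hv : AnalyticOnNhd 𝕜 v U)
    (h : ∀ s ∈ U, cross (v s) (deriv v s) = 0) :
    ∃ w ≠ 0, ∀ s ∈ U, ∃ c : 𝕜, v s = c • w := by
  by_cases hv₀ : ∀ s ∈ U, v s = 0
  · exact ⟨(1, 0), by simp, fun s hs ↦ ⟨0, by simp [hv₀ s hs]⟩⟩
  push Not at hv₀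
  obtain ⟨s₀, hs₀, hw⟩ := hv₀
  obtain ⟨u, hu⟩ := exists_cross_ne_zero hw
  have hcoord : ∀ z : 𝕜 × 𝕜, AnalyticOnNhd 𝕜 (fun s ↦ cross (v s) z) U := fun z ↦
    hv.cross analyticOnNhd_const
  have hderiv : ∀ z : 𝕜 × 𝕜, ∀ s ∈ U, deriv (fun t ↦ cross (v t) z) s = cross (deriv v s) z :=
    fun z s hs ↦ by
      simpa using ((hv s hs).differentiableAt.hasDerivAt.cross (hasDerivAt_const s z)).deriv
  have hw₀ : EqOn (fun s ↦ cross (v s) (v s₀)) 0 U := by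
    refine (hcoord _).eqOn_zero_of_deriv_mul_eq_mul_deriv hU hUc (hcoord u).differentiableOn
      (fun s hs ↦ ?_) hs₀ (by simp [cross, mul_comm]) hu
    rw [hderiv _ s hs, hderiv _ s hs]
    linear_combination -cross_mul_cross_sub_cross_mul_cross (v s) (deriv v s) (v s₀) u
      - cross (v s₀) u * h s hs
  exact ⟨v s₀, hw, fun s hs ↦ exists_eq_smul_of_cross_eq_zero hw (hw₀ hs)⟩

end Wronskian

theorem countable_tangent_lines_through_point_general
    (U : Set ℂ) (hUo : IsOpen U) (hUc : IsConnected U)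
    (γ : ℂ → ℂ × ℂ) (hγ : AnalyticOnNhd ℂ γ U)
    (hline : ¬ ∃ x₀ w : ℂ × ℂ, w ≠ 0 ∧ ∀ s ∈ U, ∃ c : ℂ, γ s = x₀ + c • w)
    (P : ℂ × ℂ) :
    Set.Countable {s ∈ U | ∃ c : ℂ, P = γ s + c • deriv γ s} := by
  set v : ℂ → ℂ × ℂ := fun s ↦ γ s - P
  have hv : AnalyticOnNhd ℂ v U := hγ.sub analyticOnNhd_const
  have hv' : deriv v = deriv γ := funext fun s ↦ deriv_sub_const P
  have htangent : {s ∈ U | ∃ c : ℂ, P = γ s + c • deriv γ s} ⊆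
      {s ∈ U | cross (v s) (deriv v s) = 0} := by
    rintro s ⟨hs, c, hc⟩
    refine ⟨hs, ?_⟩
    rw [hv', show v s = (-c) • deriv γ s by simp [v, hc], cross_smul_left_self]
  refine .mono htangent (hv.cross hv.deriv |>.countable_zeros hUc.isPreconnected fun h ↦ ?_)
  obtain ⟨w, hw, hvw⟩ := exists_forall_eq_smul_of_cross_deriv_eq_zero hUo hUc.isPreconnected hv h
  refine hline ⟨P, w, hw, fun s hs ↦ ?_⟩
  obtain ⟨c, hc⟩ := hvw s hs
  exact ⟨c, by rw [← hc, add_sub_cancel]⟩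

/-- **Proposition 5.2.** If a complex analytic regular curve in `ℂ²` is not supported by a
line, then for every point `P` of the plane, the set of parameters whose tangent line
passes through `P` is countable. -/
theorem countable_tangent_lines_through_point
    (U : Set ℂ) (hUo : IsOpen U) (hUc : IsConnected U)
    (γ : ℂ → ℂ × ℂ) (hγ : AnalyticOnNhd ℂ γ U)
    (hγ' : ∀ s ∈ U, deriv γ s ≠ 0)
    (hline : ¬ ∃ x₀ w : ℂ × ℂ, w ≠ 0 ∧ ∀ s ∈ U, ∃ c : ℂ, γ s = x₀ + c • w)
    (P : ℂ × ℂ) :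
    Set.Countable {s ∈ U | ∃ c : ℂ, P = γ s + c • deriv γ s} :=
  countable_tangent_lines_through_point_general U hUo hUc γ hγ hline P
end

section
/- Proposition 5.7 (asymptotics of the reflected azimuth at a tangency point, coordinate form). Let I ≥ 2 be an integer, U ⊆ ℂ a connected open set containing 0, and y : U → ℂ a complex analytic function of the form y(s) = s^I · h(s) with h analytic on U and h(0) ≠ 0 (so y vanishes at 0 to order exactly I; the curve s ↦ (s, y(s)) has intersection index I with its tangent line {second coordinate = 0} at the origin). Let ℓ : U → ℂ be continuous with ℓ(0) ≠ 0. For s ≠ 0 near 0 define z(s) = y(s)/s (the azimuth of the chord joining (0,0) to (s, y(s))), t(s) = y′(s) (the azimuth of the tangent line to the curve at (s, y(s))), and z*(s) = ((ℓ(s) + t(s))·z(s) − 2ℓ(s)t(s)) / (2z(s) − (ℓ(s) + t(s))) (the azimuth of the line obtained by reflecting the chord at (s,y(s)) with respect to the pair of lines with azimuths ℓ(s) and t(s)). Then, as s → 0 with s ≠ 0, t(s)/z(s) → I and z*(s)/z(s) → 2I − 1. -/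
open Filter Topology

/-- **Proposition 5.7.** Asymptotics of the reflected azimuth at a point of tangency of
order `I`: for a curve `s ↦ (s, y(s))` with `y` vanishing to order exactly `I ≥ 2` at `0`,
the azimuth `t(s) = y′(s)` of the tangent line satisfies `t(s)/z(s) → I`, and the azimuth
`z*(s)` of the chord reflected at `(s, y(s))` with respect to the pair of lines of
azimuths `ℓ(s)`, `t(s)` satisfies `z*(s)/z(s) → 2I − 1`, where `z(s) = y(s)/s` is the
azimuth of the chord from the origin. -/
theorem reflected_azimuth_asymptotics_at_tangency
    (I : ℕ) (hI : 2 ≤ I)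
    (U : Set ℂ) (hUo : IsOpen U) (hUc : IsConnected U) (h0U : (0 : ℂ) ∈ U)
    (h : ℂ → ℂ) (hh : AnalyticOnNhd ℂ h U) (hh0 : h 0 ≠ 0)
    (y : ℂ → ℂ) (hy : ∀ s ∈ U, y s = s ^ I * h s)
    (ℓ : ℂ → ℂ) (hℓ : ContinuousOn ℓ U) (hℓ0 : ℓ 0 ≠ 0) :
    Tendsto (fun s : ℂ => deriv y s / (y s / s)) (𝓝[≠] 0) (𝓝 (I : ℂ)) ∧
    Tendsto (fun s : ℂ =>
        (((ℓ s + deriv y s) * (y s / s) - 2 * ℓ s * deriv y s) /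
          (2 * (y s / s) - (ℓ s + deriv y s))) / (y s / s))
      (𝓝[≠] 0) (𝓝 (2 * (I : ℂ) - 1)) := by
  have hI1 : 1 ≤ I := le_trans one_le_two hI
  have hI10 : I - 1 ≠ 0 := by omega
  have hhc : ContinuousAt h 0 := (hh 0 h0U).continuousAt
  have hdc : ContinuousAt (deriv h) 0 := (hh.deriv 0 h0U).continuousAt
  have hℓc : ContinuousAt ℓ 0 := hℓ.continuousAt (hUo.mem_nhds h0U)
  have hU' : ∀ᶠ s in 𝓝[≠] (0:ℂ), s ∈ U :=
    eventually_nhdsWithin_of_eventually_nhds (hUo.eventually_mem h0U)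
  have hne : ∀ᶠ s in 𝓝[≠] (0:ℂ), s ≠ (0:ℂ) := eventually_mem_nhdsWithin
  have hhne : ∀ᶠ s in 𝓝[≠] (0:ℂ), h s ≠ 0 :=
    (hhc.eventually_ne hh0).filter_mono nhdsWithin_le_nhds
  have hpow : ∀ s : ℂ, s ≠ 0 → s ^ I = s ^ (I-1) * s := by
    intro s hs
    rw [← pow_succ]
    congr 1
    omega
  have hder : ∀ᶠ s in 𝓝[≠] (0:ℂ),
      deriv y s = s ^ (I-1) * ((I : ℂ) * h s + s * deriv h s) := by
    filter_upwards [hU', hne] with s hs hs0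
    have hyy : y =ᶠ[𝓝 s] fun u => u ^ I * h u :=
      eventually_of_mem (hUo.mem_nhds hs) hy
    rw [hyy.deriv_eq]
    have hd : HasDerivAt (fun u : ℂ => u ^ I * h u)
        (((I : ℂ) * s ^ (I-1)) * h s + s ^ I * deriv h s) s :=
      (hasDerivAt_pow I s).mul ((hh s hs).differentiableAt.hasDerivAt)
    rw [hd.deriv, hpow s hs0]
    ring
  have hz : ∀ᶠ s in 𝓝[≠] (0:ℂ), y s / s = s ^ (I-1) * h s := by
    filter_upwards [hU', hne] with s hs hs0
    rw [hy s hs, hpow s hs0]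
    field_simp
  constructor
  · -- first limit
    have lim1 : Tendsto (fun s : ℂ => ((I : ℂ) * h s + s * deriv h s) / h s)
        (𝓝 0) (𝓝 (I : ℂ)) := by
      have hc : ContinuousAt (fun s : ℂ => ((I : ℂ) * h s + s * deriv h s) / h s) 0 :=
        ((continuousAt_const.mul hhc).add (continuousAt_id.mul hdc)).div hhc hh0
      simpa [mul_div_assoc, div_self hh0] using hc.tendsto
    refine (lim1.mono_left nhdsWithin_le_nhds).congr' ?_
    filter_upwards [hder, hz, hne, hhne] with s hd hzz hs0 hhs
    rw [hd, hzz, mul_div_mul_left _ _ (pow_ne_zero (I-1) hs0)]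
  · -- second limit
    set G := fun s : ℂ =>
      ((ℓ s + s ^ (I-1) * ((I : ℂ) * h s + s * deriv h s)) * h s
        - 2 * ℓ s * ((I : ℂ) * h s + s * deriv h s)) /
      (h s * (2 * (s ^ (I-1) * h s)
        - (ℓ s + s ^ (I-1) * ((I : ℂ) * h s + s * deriv h s)))) with hG
    have hcnum : ContinuousAt (fun s : ℂ =>
        (ℓ s + s ^ (I-1) * ((I : ℂ) * h s + s * deriv h s)) * h s
        - 2 * ℓ s * ((I : ℂ) * h s + s * deriv h s)) 0 := by fun_prop
    have hcden : ContinuousAt (fun s : ℂ =>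
        h s * (2 * (s ^ (I-1) * h s)
        - (ℓ s + s ^ (I-1) * ((I : ℂ) * h s + s * deriv h s)))) 0 := by fun_prop
    have hden0 : h 0 * (2 * ((0:ℂ) ^ (I-1) * h 0)
        - (ℓ 0 + (0:ℂ) ^ (I-1) * ((I : ℂ) * h 0 + 0 * deriv h 0))) ≠ 0 := by
      rw [zero_pow hI10]
      simpa using mul_ne_zero hh0 (neg_ne_zero.mpr hℓ0)
    have hGc : ContinuousAt G 0 := hcnum.div hcden hden0
    have hGval : G 0 = 2 * (I : ℂ) - 1 := by
      rw [hG]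
      simp only [zero_pow hI10, zero_mul, mul_zero, add_zero, zero_add, sub_zero]
      field_simp
      ring
    have lim2 : Tendsto G (𝓝 0) (𝓝 (2 * (I : ℂ) - 1)) := by
      simpa [hGval] using hGc.tendsto
    refine (lim2.mono_left nhdsWithin_le_nhds).congr' ?_
    filter_upwards [hder, hz, hne, hhne] with s hd hzz hs0 hhs
    rw [hG]
    rw [hd, hzz, div_div]
    set x := s ^ (I-1) with hx
    have hxne : x ≠ 0 := pow_ne_zero (I-1) hs0
    set Q := (I : ℂ) * h s + s * deriv h s with hQ
    have e1 : (ℓ s + x * Q) * (x * h s) - 2 * ℓ s * (x * Q)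
        = x * ((ℓ s + x * Q) * h s - 2 * ℓ s * Q) := by ring
    have e2 : (2 * (x * h s) - (ℓ s + x * Q)) * (x * h s)
        = x * (h s * (2 * (x * h s) - (ℓ s + x * Q))) := by ring
    rw [e1, e2, mul_div_mul_left _ _ hxne]
end

section
/- Lemma 4.7 (rank of the projective billiard reflection map, planar analytic core). Let B ∈ ℂ², and let v, τ ∈ ℂ² be nonzero vectors that are not proportional (the field and tangent directions of a projective billiard vertex at B). Let a₁ : U₁ → ℂ² and a₃ : U₃ → ℂ² be complex analytic maps on open sets U₁, U₃ ⊆ ℂ with a₁′ and a₃′ nowhere vanishing, and let s₀ ∈ U₁, t₀ ∈ U₃ be such that: a₁(s₀) ≠ B and a₃(t₀) ≠ B; the vectors a₁(s₀) − B and a₃(t₀) − B are symmetric with respect to (v, τ); a₁(s₀) − B ∉ ℂ∙a₁′(s₀) (the line through a₁(s₀) and B is transverse to the curve a₁ at s₀); and a₃(t₀) − B ∉ ℂ∙a₃′(t₀) (the line through a₃(t₀) and B is transverse to the curve a₃ at t₀). Then there exist an open neighborhood W ⊆ U₁ of s₀ and a complex analytic map g : W → U₃ with g(s₀) = t₀ such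 that for every s ∈ W the vectors a₁(s) − B and a₃(g(s)) − B are symmetric with respect to (v, τ), and moreover g′(s₀) ≠ 0. -/
/-- Two nonzero vectors `u`, `w` of the plane are symmetric with respect to the pair
`(v, τ)` (field direction, tangent direction): there are nonzero scalars `p`, `q` with
`p • u + q • w` on the line spanned by `τ` and `p • u - q • w` on the line spanned by `v`. -/
def PlaneSym (𝕜 : Type*) [Field 𝕜] (v τ u w : 𝕜 × 𝕜) : Prop :=
  ∃ p q : 𝕜, p ≠ 0 ∧ q ≠ 0 ∧ p • u + q • w ∈ Submodule.span 𝕜 {τ} ∧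
    p • u - q • w ∈ Submodule.span 𝕜 {v}

/-!
A line through `B` is a point of the projective line. In the affine chart `lineCoord c e` that
sends the chord `c = a₃ t₀ - B` to `0` and the tangent `e = a₃' t₀` to `∞`, the coordinate
`φ t` of the chord `a₃ t - B` has derivative `1` at `t₀`, so `φ` has an analytic local inverse
`ψ`. Symmetry with respect to `(v, τ)` says that `a₃ t - B` is proportional to the image of
`a₁ s - B` under the linear reflection fixing `τ` and negating `v`; hence `g = ψ ∘ σ`, where
`σ s` is the coordinate of the reflected chord. Since the reflection has determinant `-1` and
the chord at `s₀` is transverse to `a₁`, `σ' s₀ ≠ 0`.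
-/

open Filter Topology

section Algebra

variable {𝕜 : Type*} [Field 𝕜]

def wedge (u w : 𝕜 × 𝕜) : 𝕜 := u.1 * w.2 - u.2 * w.1

@[simp] lemma wedge_self (u : 𝕜 × 𝕜) : wedge u u = 0 := by
  unfold wedge; ring

@[simp] lemma wedge_zero_left (w : 𝕜 × 𝕜) : wedge 0 w = 0 := by
  simp [wedge]

@[simp] lemma wedge_zero_right (u : 𝕜 × 𝕜) : wedge u 0 = 0 := by
  simp [wedge]

lemma wedge_smul_left (a : 𝕜) (u w : 𝕜 × 𝕜) : wedge (a • u) w = a * wedge u w := by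
  simp only [wedge, Prod.smul_fst, Prod.smul_snd, smul_eq_mul]; ring

lemma wedge_eq_zero_iff_mem_span {w z : 𝕜 × 𝕜} (hz : z ≠ 0) :
    wedge w z = 0 ↔ w ∈ Submodule.span 𝕜 {z} := by
  rw [Submodule.mem_span_singleton]
  refine ⟨fun h => ?_, fun ⟨a, ha⟩ => by rw [← ha, wedge_smul_left, wedge_self, mul_zero]⟩
  have h' : w.1 * z.2 = w.2 * z.1 := sub_eq_zero.1 h
  obtain h1 | h2 : z.1 ≠ 0 ∨ z.2 ≠ 0 := by
    by_contra! h0; exact hz (Prod.ext h0.1 h0.2)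
  · refine ⟨w.1 / z.1, Prod.ext ?_ ?_⟩ <;> simp only [Prod.smul_fst, Prod.smul_snd, smul_eq_mul]
    · field_simp
    · field_simp; linear_combination h'
  · refine ⟨w.2 / z.2, Prod.ext ?_ ?_⟩ <;> simp only [Prod.smul_fst, Prod.smul_snd, smul_eq_mul]
    · field_simp; linear_combination -h'
    · field_simp

/-- By Cramer's rule `wedge v τ • u = wedge u τ • v + wedge v u • τ`; the reflection changes the
sign of the `v`-component. -/
def reflection (v τ : 𝕜 × 𝕜) : (𝕜 × 𝕜) →ₗ[𝕜] 𝕜 × 𝕜 where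
  toFun u := (wedge v τ)⁻¹ • (wedge v u • τ - wedge u τ • v)
  map_add' x y := by ext <;> simp only [wedge, Prod.fst_add, Prod.snd_add, Prod.smul_fst,
    Prod.smul_snd, Prod.fst_sub, Prod.snd_sub, smul_eq_mul] <;> ring
  map_smul' a x := by ext <;> simp only [wedge, Prod.smul_fst, Prod.smul_snd, Prod.fst_sub,
    Prod.snd_sub, smul_eq_mul, RingHom.id_apply] <;> ring

lemma reflection_apply (v τ u : 𝕜 × 𝕜) :
    reflection v τ u = (wedge v τ)⁻¹ • (wedge v u • τ - wedge u τ • v) := rfl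

section Reflection

variable {v τ : 𝕜 × 𝕜} (hd : wedge v τ ≠ 0)
include hd

lemma reflection_apply_left : reflection v τ v = -v := by
  rw [reflection_apply, wedge_self, zero_smul, zero_sub, smul_neg, inv_smul_smul₀ hd]

lemma reflection_apply_right : reflection v τ τ = τ := by
  rw [reflection_apply, wedge_self, zero_smul, sub_zero, inv_smul_smul₀ hd]

lemma wedge_reflection_reflection (x y : 𝕜 × 𝕜) :
    wedge (reflection v τ x) (reflection v τ y) = -wedge x y := by
  simp only [reflection_apply, wedge, Prod.smul_fst, Prod.smul_snd, Prod.fst_sub, Prod.snd_sub,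
    smul_eq_mul] at hd ⊢
  field_simp
  ring

lemma add_reflection_mem_span (u : 𝕜 × 𝕜) :
    u + reflection v τ u ∈ Submodule.span 𝕜 {τ} := by
  refine Submodule.mem_span_singleton.2 ⟨2 * (wedge v τ)⁻¹ * wedge v u, ?_⟩
  simp only [reflection_apply, wedge] at hd ⊢
  ext <;> simp only [Prod.smul_fst, Prod.smul_snd, Prod.fst_add, Prod.snd_add, Prod.fst_sub,
    Prod.snd_sub, smul_eq_mul] <;> field_simp <;> ring

lemma sub_reflection_mem_span (u : 𝕜 × 𝕜) :
    u - reflection v τ u ∈ Submodule.span 𝕜 {v} := by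
  refine Submodule.mem_span_singleton.2 ⟨2 * (wedge v τ)⁻¹ * wedge u τ, ?_⟩
  simp only [reflection_apply, wedge] at hd ⊢
  ext <;> simp only [Prod.smul_fst, Prod.smul_snd, Prod.fst_sub, Prod.snd_sub, smul_eq_mul] <;>
    field_simp <;> ring

lemma planeSym_iff (h2 : (2 : 𝕜) ≠ 0) {u w : 𝕜 × 𝕜} :
    PlaneSym 𝕜 v τ u w ↔ ∃ μ : 𝕜, μ ≠ 0 ∧ w = μ • reflection v τ u := by
  constructor
  · rintro ⟨p, q, hp, hq, hτ, hv⟩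
    obtain ⟨β, hβ⟩ := Submodule.mem_span_singleton.1 hτ
    obtain ⟨α, hα⟩ := Submodule.mem_span_singleton.1 hv
    have key : (2 * q) • w = (2 * p) • reflection v τ u := calc
      (2 * q) • w = reflection v τ (β • τ + α • v) := by
        rw [map_add, map_smul, map_smul, reflection_apply_left hd, reflection_apply_right hd,
          smul_neg, hβ, hα]
        module
      _ = (2 * p) • reflection v τ u := by
        rw [hβ, hα, ← map_smul]
        congr 1
        module
    refine ⟨p / q, div_ne_zero hp hq, ?_⟩
    rw [← inv_smul_smul₀ (mul_ne_zero h2 hq) w, key, smul_smul]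
    congr 1
    field_simp
  · rintro ⟨μ, hμ, rfl⟩
    refine ⟨μ, 1, hμ, one_ne_zero, ?_, ?_⟩
    · rw [one_smul, ← smul_add]
      exact Submodule.smul_mem _ _ (add_reflection_mem_span hd u)
    · rw [one_smul, ← smul_sub]
      exact Submodule.smul_mem _ _ (sub_reflection_mem_span hd u)

end Reflection

/-- The affine coordinate of the line `𝕜 ∙ x` in the chart of the projective line sending
`𝕜 ∙ c` to `0` and `𝕜 ∙ e` to `∞`. -/
def lineCoord (c e x : 𝕜 × 𝕜) : 𝕜 := wedge c x / wedge x e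

lemma wedge_eq_zero_of_lineCoord_eq {c e x y : 𝕜 × 𝕜} (hce : wedge c e ≠ 0)
    (hx : wedge x e ≠ 0) (hy : wedge y e ≠ 0) (h : lineCoord c e x = lineCoord c e y) :
    wedge x y = 0 := by
  rw [lineCoord, lineCoord, div_eq_div_iff hx hy] at h
  have : wedge c e * wedge x y = 0 := by
    simp only [wedge] at h ⊢
    linear_combination -h
  exact (mul_eq_zero.1 this).resolve_left hce

lemma planeSym_of_lineCoord_eq (h2 : (2 : 𝕜) ≠ 0) {v τ c e x y : 𝕜 × 𝕜}
    (hd : wedge v τ ≠ 0) (hce : wedge c e ≠ 0) (hx : wedge (reflection v τ x) e ≠ 0)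
    (hy : wedge y e ≠ 0) (h : lineCoord c e y = lineCoord c e (reflection v τ x)) :
    PlaneSym 𝕜 v τ x y := by
  have hRx : reflection v τ x ≠ 0 := by
    rintro h0; rw [h0, wedge_zero_left] at hx; exact hx rfl
  obtain ⟨μ, rfl⟩ := Submodule.mem_span_singleton.1 <|
    (wedge_eq_zero_iff_mem_span hRx).1 (wedge_eq_zero_of_lineCoord_eq hce hy hx h)
  refine (planeSym_iff hd h2).2 ⟨μ, ?_, rfl⟩
  rintro rfl
  rw [zero_smul, wedge_zero_left] at hy
  exact hy rfl

end Algebra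

section Analysis

variable {𝕜 : Type*} [NontriviallyNormedField 𝕜] {f g : 𝕜 → 𝕜 × 𝕜} {f' g' : 𝕜 × 𝕜} {x : 𝕜}

lemma hasDerivAt_wedge (hf : HasDerivAt f f' x) (hg : HasDerivAt g g' x) :
    HasDerivAt (fun s => wedge (f s) (g s)) (wedge f' (g x) + wedge (f x) g') x := by
  have fst {h : 𝕜 → 𝕜 × 𝕜} {h' : 𝕜 × 𝕜} (hh : HasDerivAt h h' x) :
      HasDerivAt (fun s => (h s).1) h'.1 x :=
    (ContinuousLinearMap.fst 𝕜 𝕜 𝕜).hasFDerivAt.comp_hasDerivAt x hh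
  have snd {h : 𝕜 → 𝕜 × 𝕜} {h' : 𝕜 × 𝕜} (hh : HasDerivAt h h' x) :
      HasDerivAt (fun s => (h s).2) h'.2 x :=
    (ContinuousLinearMap.snd 𝕜 𝕜 𝕜).hasFDerivAt.comp_hasDerivAt x hh
  exact (((fst hf).fun_mul (snd hg)).fun_sub ((snd hf).fun_mul (fst hg))).congr_deriv
    (by simp only [wedge]; ring)

lemma analyticAt_wedge (hf : AnalyticAt 𝕜 f x) (hg : AnalyticAt 𝕜 g x) :
    AnalyticAt 𝕜 (fun s => wedge (f s) (g s)) x :=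
  ((analyticAt_fst.comp hf).mul (analyticAt_snd.comp hg)).sub
    ((analyticAt_snd.comp hf).mul (analyticAt_fst.comp hg))

variable {c e : 𝕜 × 𝕜}

lemma hasDerivAt_lineCoord (hf : HasDerivAt f f' x) (hc : wedge c (f x) = 0)
    (he : wedge (f x) e ≠ 0) :
    HasDerivAt (fun s => lineCoord c e (f s)) (wedge c f' / wedge (f x) e) x := by
  refine ((hasDerivAt_wedge (hasDerivAt_const x c) hf).fun_div
    (hasDerivAt_wedge hf (hasDerivAt_const x e)) he).congr_deriv ?_
  simp only [wedge_zero_left, wedge_zero_right, hc, zero_add, add_zero, zero_mul, sub_zero]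
  field_simp

lemma analyticAt_lineCoord (hf : AnalyticAt 𝕜 f x) (he : wedge (f x) e ≠ 0) :
    AnalyticAt 𝕜 (fun s => lineCoord c e (f s)) x :=
  (analyticAt_wedge analyticAt_const hf).div (analyticAt_wedge hf analyticAt_const) he

variable [CompleteSpace 𝕜]

lemma AnalyticAt.exists_localInverse [CharZero 𝕜] {φ : 𝕜 → 𝕜} {φ' t₀ : 𝕜}
    (hφ : AnalyticAt 𝕜 φ t₀) (hφ' : HasDerivAt φ φ' t₀) (h0 : φ' ≠ 0) :
    ∃ ψ : 𝕜 → 𝕜, AnalyticAt 𝕜 ψ (φ t₀) ∧ ψ (φ t₀) = t₀ ∧ HasDerivAt ψ φ'⁻¹ (φ t₀) ∧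
      ∀ᶠ y in 𝓝 (φ t₀), φ (ψ y) = y := by
  rw [← hφ'.deriv] at h0 ⊢
  have hs := hφ.hasStrictDerivAt
  exact ⟨_, hφ.analyticAt_localInverse h0, HasStrictFDerivAt.localInverse_apply_image _,
    (hs.to_localInverse h0).hasDerivAt, hs.eventually_right_inverse h0⟩

lemma hasDerivAt_reflection {v τ : 𝕜 × 𝕜} (hf : HasDerivAt f f' x) :
    HasDerivAt (fun s => reflection v τ (f s)) (reflection v τ f') x :=
  (LinearMap.toContinuousLinearMap (reflection v τ)).hasFDerivAt.comp_hasDerivAt x hf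

lemma analyticAt_reflection {v τ : 𝕜 × 𝕜} (hf : AnalyticAt 𝕜 f x) :
    AnalyticAt 𝕜 (fun s => reflection v τ (f s)) x :=
  ((LinearMap.toContinuousLinearMap (reflection v τ)).analyticAt _).comp hf

end Analysis

theorem exists_analyticAt_planeSym_map {𝕜 : Type*} [NontriviallyNormedField 𝕜]
    [CompleteSpace 𝕜] [CharZero 𝕜] {v τ : 𝕜 × 𝕜} (hd : wedge v τ ≠ 0)
    {b₁ b₃ : 𝕜 → 𝕜 × 𝕜} {s₀ t₀ : 𝕜}
    (hb₁ : AnalyticAt 𝕜 b₁ s₀) (hb₃ : AnalyticAt 𝕜 b₃ t₀)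
    (hsym : PlaneSym 𝕜 v τ (b₁ s₀) (b₃ t₀))
    (htrans₁ : wedge (b₁ s₀) (deriv b₁ s₀) ≠ 0) (htrans₃ : wedge (b₃ t₀) (deriv b₃ t₀) ≠ 0) :
    ∃ g : 𝕜 → 𝕜, AnalyticAt 𝕜 g s₀ ∧ g s₀ = t₀ ∧ deriv g s₀ ≠ 0 ∧
      ∀ᶠ s in 𝓝 s₀, PlaneSym 𝕜 v τ (b₁ s) (b₃ (g s)) := by
  set R := reflection v τ
  set c := b₃ t₀
  set e := deriv b₃ t₀
  obtain ⟨l, hl, hc⟩ : ∃ l : 𝕜, l ≠ 0 ∧ c = l • R (b₁ s₀) :=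
    (planeSym_iff hd two_ne_zero).1 hsym
  have hRe : wedge (R (b₁ s₀)) e ≠ 0 := by
    rintro h; apply htrans₃; rw [hc, wedge_smul_left, h, mul_zero]
  set φ : 𝕜 → 𝕜 := fun t => lineCoord c e (b₃ t)
  set σ : 𝕜 → 𝕜 := fun s => lineCoord c e (R (b₁ s))
  have hφ : HasDerivAt φ 1 t₀ :=
    (hasDerivAt_lineCoord hb₃.differentiableAt.hasDerivAt (wedge_self c) htrans₃).congr_deriv
      (div_self htrans₃)
  have hσ : HasDerivAt σ (wedge c (R (deriv b₁ s₀)) / wedge (R (b₁ s₀)) e) s₀ :=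
    hasDerivAt_lineCoord (hasDerivAt_reflection hb₁.differentiableAt.hasDerivAt)
      (by rw [hc, wedge_smul_left, wedge_self, mul_zero]) hRe
  have hσ' : wedge c (R (deriv b₁ s₀)) / wedge (R (b₁ s₀)) e ≠ 0 := by
    rw [hc, wedge_smul_left, wedge_reflection_reflection hd]
    exact div_ne_zero (mul_ne_zero hl (neg_ne_zero.2 htrans₁)) hRe
  have hσ₀ : σ s₀ = φ t₀ := by
    change wedge c (R (b₁ s₀)) / _ = wedge c c / _
    rw [wedge_self, zero_div, hc, wedge_smul_left, wedge_self, mul_zero, zero_div]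
  obtain ⟨ψ, hψ, hψφ, hψ', hφψ⟩ :=
    (analyticAt_lineCoord hb₃ htrans₃).exists_localInverse hφ one_ne_zero
  have hσan : AnalyticAt 𝕜 σ s₀ := analyticAt_lineCoord (analyticAt_reflection hb₁) hRe
  have hσlim : Tendsto σ (𝓝 s₀) (𝓝 (φ t₀)) := hσ₀ ▸ hσan.continuousAt.tendsto
  have hglim : Tendsto (ψ ∘ σ) (𝓝 s₀) (𝓝 t₀) := hψφ ▸ hψ.continuousAt.tendsto.comp hσlim
  have hRs : ∀ᶠ s in 𝓝 s₀, wedge (R (b₁ s)) e ≠ 0 :=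
    (analyticAt_wedge (analyticAt_reflection hb₁) analyticAt_const).continuousAt.eventually_ne hRe
  have hbt : ∀ᶠ t in 𝓝 t₀, wedge (b₃ t) e ≠ 0 :=
    (analyticAt_wedge hb₃ analyticAt_const).continuousAt.eventually_ne htrans₃
  refine ⟨ψ ∘ σ, hψ.comp_of_eq hσan hσ₀, by rw [Function.comp_apply, hσ₀, hψφ], ?_, ?_⟩
  · rw [(hψ'.comp_of_eq s₀ hσ hσ₀.symm).deriv]
    exact mul_ne_zero (inv_ne_zero one_ne_zero) hσ'
  · filter_upwards [hσlim.eventually hφψ, hRs, hglim.eventually hbt] with s hcoord hRs hgs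
    exact planeSym_of_lineCoord_eq two_ne_zero hd htrans₃ hRs hgs hcoord

theorem billiard_reflection_map_rank_one_general
    (B v τ : ℂ × ℂ) (hτ : τ ≠ 0)
    (hvτ : v ∉ Submodule.span ℂ {τ})
    (U₁ U₃ : Set ℂ) (hU₁o : IsOpen U₁) (hU₃o : IsOpen U₃)
    (a₁ a₃ : ℂ → ℂ × ℂ)
    (ha₁ : AnalyticOnNhd ℂ a₁ U₁) (ha₃ : AnalyticOnNhd ℂ a₃ U₃)
    (ha₁' : ∀ s ∈ U₁, deriv a₁ s ≠ 0) (ha₃' : ∀ t ∈ U₃, deriv a₃ t ≠ 0)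
    (s₀ : ℂ) (t₀ : ℂ) (hs₀ : s₀ ∈ U₁) (ht₀ : t₀ ∈ U₃)
    (hsym : PlaneSym ℂ v τ (a₁ s₀ - B) (a₃ t₀ - B))
    (htrans₁ : a₁ s₀ - B ∉ Submodule.span ℂ {deriv a₁ s₀})
    (htrans₃ : a₃ t₀ - B ∉ Submodule.span ℂ {deriv a₃ t₀}) :
    ∃ W : Set ℂ, IsOpen W ∧ s₀ ∈ W ∧ W ⊆ U₁ ∧
      ∃ g : ℂ → ℂ, AnalyticOnNhd ℂ g W ∧ Set.MapsTo g W U₃ ∧ g s₀ = t₀ ∧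
        (∀ s ∈ W, PlaneSym ℂ v τ (a₁ s - B) (a₃ (g s) - B)) ∧
        deriv g s₀ ≠ 0 := by
  have hd : wedge v τ ≠ 0 := (wedge_eq_zero_iff_mem_span hτ).not.2 hvτ
  have transverse {a : ℂ → ℂ × ℂ} {x : ℂ} (ha' : deriv a x ≠ 0)
      (h : a x - B ∉ Submodule.span ℂ {deriv a x}) :
      wedge (a x - B) (deriv (fun y => a y - B) x) ≠ 0 := by
    rwa [deriv_sub_const, Ne, wedge_eq_zero_iff_mem_span ha']
  obtain ⟨g, hg, hg₀, hg', hsym_near⟩ := exists_analyticAt_planeSym_map hd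
    ((ha₁ s₀ hs₀).sub analyticAt_const) ((ha₃ t₀ ht₀).sub analyticAt_const) hsym
    (transverse (ha₁' s₀ hs₀) htrans₁) (transverse (ha₃' t₀ ht₀) htrans₃)
  have hgU₃ : ∀ᶠ s in 𝓝 s₀, g s ∈ U₃ :=
    hg.continuousAt.eventually_mem (hg₀ ▸ hU₃o.mem_nhds ht₀)
  obtain ⟨W, hW, hWo, hs₀W⟩ := eventually_nhds_iff.1 <|
    (hU₁o.eventually_mem hs₀).and (hg.eventually_analyticAt.and (hgU₃.and hsym_near))
  exact ⟨W, hWo, hs₀W, fun s hs => (hW s hs).1, g, fun s hs => (hW s hs).2.1,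
    fun s hs => (hW s hs).2.2.1, hg₀, fun s hs => (hW s hs).2.2.2, hg'⟩

/-- **Lemma 4.7** (planar analytic core). The projective billiard reflection map at a fixed
vertex `B`, sending a point of one analytic curve to the point of another analytic curve
obtained by reflecting the chord at `B`, is a well-defined analytic map of nonzero
derivative near a transversal reflection configuration. -/
theorem billiard_reflection_map_rank_one
    (B v τ : ℂ × ℂ) (hv : v ≠ 0) (hτ : τ ≠ 0)
    (hvτ : v ∉ Submodule.span ℂ {τ})
    (U₁ U₃ : Set ℂ) (hU₁o : IsOpen U₁) (hU₃o : IsOpen U₃)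
    (a₁ a₃ : ℂ → ℂ × ℂ)
    (ha₁ : AnalyticOnNhd ℂ a₁ U₁) (ha₃ : AnalyticOnNhd ℂ a₃ U₃)
    (ha₁' : ∀ s ∈ U₁, deriv a₁ s ≠ 0) (ha₃' : ∀ t ∈ U₃, deriv a₃ t ≠ 0)
    (s₀ : ℂ) (t₀ : ℂ) (hs₀ : s₀ ∈ U₁) (ht₀ : t₀ ∈ U₃)
    (hAB : a₁ s₀ ≠ B) (hCB : a₃ t₀ ≠ B)
    (hsym : PlaneSym ℂ v τ (a₁ s₀ - B) (a₃ t₀ - B))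
    (htrans₁ : a₁ s₀ - B ∉ Submodule.span ℂ {deriv a₁ s₀})
    (htrans₃ : a₃ t₀ - B ∉ Submodule.span ℂ {deriv a₃ t₀}) :
    ∃ W : Set ℂ, IsOpen W ∧ s₀ ∈ W ∧ W ⊆ U₁ ∧
      ∃ g : ℂ → ℂ, AnalyticOnNhd ℂ g W ∧ Set.MapsTo g W U₃ ∧ g s₀ = t₀ ∧
        (∀ s ∈ W, PlaneSym ℂ v τ (a₁ s - B) (a₃ (g s) - B)) ∧
        deriv g s₀ ≠ 0 :=
  billiard_reflection_map_rank_one_general B v τ hτ hvτ U₁ U₃ hU₁o hU₃o a₁ a₃ ha₁ ha₃ ha₁' ha₃' s₀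
    t₀ hs₀ ht₀ hsym htrans₁ htrans₃
end

section
/- Lemma 6.1 (triangular orbits are planar and transverse). Let d ≥ 2, let A, B, C ∈ ℂ^d be points that are not collinear, let T ⊆ ℂ^d be a (d−1)-dimensional linear subspace (the tangent hyperplane at A), and let v ∈ ℂ^d with v ∉ T (the field direction at A). If B − A and C − A are symmetric with respect to (v, T), then: (i) v ∈ span{B − A, C − A}, so the field line at A lies in the plane through A, B, C; and (ii) span{B − A, C − A} is not contained in T, so the plane through A, B, C is transverse to the tangent hyperplane at A. -/
/-- Reflection law in `𝕜^d`: nonzero vectors `u`, `w` are symmetric with respect to the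
pair `(v, T)` (field direction, tangent hyperplane) if there are nonzero scalars `p`, `q`
with `p • u + q • w ∈ T` and `p • u - q • w` on the line spanned by `v`. -/
def HypSym (𝕜 : Type*) [Field 𝕜] {E : Type*} [AddCommGroup E] [Module 𝕜 E]
    (v : E) (T : Submodule 𝕜 E) (u w : E) : Prop :=
  ∃ p q : 𝕜, p ≠ 0 ∧ q ≠ 0 ∧ p • u + q • w ∈ T ∧ p • u - q • w ∈ Submodule.span 𝕜 {v}

/-- **Lemma 6.1.** Triangular orbits are planar and transverse: if `B − A` and `C − A`
are symmetric with respect to `(v, T)` at a vertex `A` of a nondegenerate triangle, then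
the field direction `v` lies in the plane of the triangle, and that plane is not contained
in the tangent hyperplane `T`. -/
theorem triangular_orbits_planar_and_transverse
    (d : ℕ) (hd : 2 ≤ d)
    (A B C : Fin d → ℂ) (hcol : ¬ Collinear ℂ {A, B, C})
    (T : Submodule ℂ (Fin d → ℂ)) (hT : Module.finrank ℂ T = d - 1)
    (v : Fin d → ℂ) (hv : v ∉ T)
    (hsym : HypSym ℂ v T (B - A) (C - A)) :
    v ∈ Submodule.span ℂ {B - A, C - A} ∧
      ¬ (Submodule.span ℂ {B - A, C - A} ≤ T) := by
  obtain ⟨p, q, hp, hq, hsum, hdiff⟩ := hsym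
  rw [Submodule.mem_span_singleton] at hdiff
  obtain ⟨c, hc⟩ := hdiff
  have huw : B - A ∈ Submodule.span ℂ ({B - A, C - A} : Set (Fin d → ℂ)) :=
    Submodule.subset_span (by simp)
  have hww : C - A ∈ Submodule.span ℂ ({B - A, C - A} : Set (Fin d → ℂ)) :=
    Submodule.subset_span (by simp)
  have hc0 : c ≠ 0 := by
    intro h0
    subst h0
    rw [zero_smul] at hc
    have hc' : C - A = (q⁻¹ * p) • (B - A) := by
      have h1 : p • (B - A) = q • (C - A) := sub_eq_zero.mp hc.symm
      rw [mul_smul, h1, smul_smul, inv_mul_cancel₀ hq, one_smul]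
    apply hcol
    rw [collinear_iff_exists_forall_eq_smul_vadd]
    refine ⟨A, B - A, ?_⟩
    rintro x (rfl | rfl | rfl)
    · exact ⟨0, by simp⟩
    · exact ⟨1, by simp⟩
    · exact ⟨q⁻¹ * p, by rw [← hc']; simp⟩
  have hvmem : v ∈ Submodule.span ℂ ({B - A, C - A} : Set (Fin d → ℂ)) := by
    have : v = c⁻¹ • (p • (B - A) - q • (C - A)) := by
      rw [← hc, smul_smul, inv_mul_cancel₀ hc0, one_smul]
    rw [this]
    exact Submodule.smul_mem _ _ (Submodule.sub_mem _ (Submodule.smul_mem _ _ huw)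
      (Submodule.smul_mem _ _ hww))
  refine ⟨hvmem, fun hle => hv (hle hvmem)⟩
end

section
/- Lemma 6.2 (an analytic hypersurface containing an open family of lines through a point is a hyperplane, graph form). Let n ≥ 1, let V ⊆ ℂⁿ be a nonempty connected open set containing 0, and let f : ℂⁿ → ℂ be complex analytic on V with f(0) = 0. Let W ⊆ ℂⁿ be a nonempty open set such that for every v ∈ W there exists ε > 0 with the property that for all c ∈ ℂ with |c| < ε one has c•v ∈ V and f(c•v) = 0. Then f vanishes identically on V. (Consequently, an analytic hypersurface in ℂ^{n+1} that, for a nonempty open set of tangent directions at one of its points p, contains a segment of the line through p in each such direction, is a hyperplane.) -/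
/-- **Lemma 6.2.** An analytic function on a connected open set `V ∋ 0` in `ℂⁿ` vanishing
on a segment of the line through `0` in every direction from a nonempty open set of
directions vanishes identically: an analytic hypersurface containing an open family of
line segments through one of its points is a hyperplane. -/
theorem analytic_vanishing_on_open_family_of_lines
    (n : ℕ) (hn : 1 ≤ n)
    (V : Set (Fin n → ℂ)) (hVo : IsOpen V) (hVc : IsConnected V)
    (h0V : (0 : Fin n → ℂ) ∈ V)
    (f : (Fin n → ℂ) → ℂ) (hf : AnalyticOnNhd ℂ f V) (hf0 : f 0 = 0)
    (W : Set (Fin n → ℂ)) (hWo : IsOpen W) (hWne : W.Nonempty)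
    (hW : ∀ v ∈ W, ∃ ε > (0 : ℝ), ∀ c : ℂ, ‖c‖ < ε → c • v ∈ V ∧ f (c • v) = 0) :
    ∀ x ∈ V, f x = 0 := by
  obtain ⟨v₀, hv₀W⟩ := hWne
  obtain ⟨ε, hε, hεW⟩ := hW v₀ hv₀W
  set c₀ : ℂ := ((ε/2 : ℝ) : ℂ) with hc₀def
  have hc₀ : ‖c₀‖ = ε/2 := by
    simp [hc₀def, abs_of_pos hε]
  have hc₀ne : c₀ ≠ 0 := by
    simp [hc₀def]; intro h; linarith
  -- compact tube
  have hK : IsCompact ((fun c : ℂ => c • v₀) '' Metric.closedBall 0 (3*ε/4)) :=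
    (isCompact_closedBall _ _).image (by fun_prop)
  have hKV : ((fun c : ℂ => c • v₀) '' Metric.closedBall 0 (3*ε/4)) ⊆ V := by
    rintro _ ⟨c, hc, rfl⟩
    have : ‖c‖ < ε := by
      have h1 : ‖c‖ ≤ 3*ε/4 := by simpa using Metric.mem_closedBall.mp hc
      linarith
    exact (hεW c this).1
  obtain ⟨δ, hδ, hδV⟩ := hK.exists_thickening_subset_open hVo hKV
  -- claim: f vanishes on c₀ • (small ball ∩ W)
  have key : ∀ v, v ∈ Metric.ball v₀ (δ/ε) ∩ W → f (c₀ • v) = 0 := by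
    rintro v ⟨hvb, hvW⟩
    have hmem : ∀ c : ℂ, ‖c‖ < 3*ε/4 → c • v ∈ V := by
      intro c hc
      apply hδV
      apply Metric.mem_thickening_iff.mpr
      refine ⟨c • v₀, ⟨c, by simpa using hc.le, rfl⟩, ?_⟩
      have : dist (c • v) (c • v₀) = ‖c‖ * dist v v₀ := by
        simp [dist_eq_norm, ← smul_sub, norm_smul]
      rw [this]
      have hd : dist v v₀ < δ/ε := Metric.mem_ball.mp hvb
      calc ‖c‖ * dist v v₀ ≤ (3*ε/4) * dist v v₀ := by
            apply mul_le_mul_of_nonneg_right hc.le dist_nonneg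
        _ < (3*ε/4) * (δ/ε) + (ε/4)*(δ/ε) := by
            nlinarith [dist_nonneg (x := v) (y := v₀), mul_pos hε (div_pos hδ hε)]
        _ = δ := by field_simp; ring
    have hg : AnalyticOnNhd ℂ (fun c : ℂ => f (c • v)) (Metric.ball (0:ℂ) (3*ε/4)) := by
      intro c hc
      have h1 : AnalyticAt ℂ (fun c : ℂ => c • v) c := (analyticAt_id).smul analyticAt_const
      have h2 : AnalyticAt ℂ f ((fun c : ℂ => c • v) c) := hf _ (hmem c (by simpa using hc))
      have h3 : AnalyticAt ℂ (f ∘ fun c : ℂ => c • v) c := AnalyticAt.comp (x := c) h2 h1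
      exact h3
    obtain ⟨ε', hε', hε'W⟩ := hW v hvW
    have hev : (fun c : ℂ => f (c • v)) =ᶠ[nhds (0:ℂ)] 0 := by
      filter_upwards [Metric.ball_mem_nhds (0:ℂ) hε'] with c hc
      exact (hε'W c (by simpa using hc)).2
    have := hg.eqOn_zero_of_preconnected_of_eventuallyEq_zero
      ((convex_ball (0:ℂ) (3*ε/4)).isPreconnected) (by simp; linarith) hev
    exact this (by simp [hc₀]; linarith)
  -- f =ᶠ 0 near c₀ • v₀
  obtain ⟨r, hr, hrW⟩ := Metric.isOpen_iff.mp hWo v₀ hv₀W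
  set ρ := min r (δ/ε) with hρdef
  have hρ : 0 < ρ := lt_min hr (div_pos hδ hε)
  have hev : f =ᶠ[nhds (c₀ • v₀)] 0 := by
    filter_upwards [Metric.ball_mem_nhds (c₀ • v₀) (mul_pos (by rw [hc₀]; linarith : (0:ℝ) < ‖c₀‖) hρ)] with x hx
    have hv : ‖c₀⁻¹ • x - v₀‖ < ρ := by
      have : c₀⁻¹ • x - v₀ = c₀⁻¹ • (x - c₀ • v₀) := by
        rw [smul_sub, inv_smul_smul₀ hc₀ne]
      rw [this, norm_smul, norm_inv]
      have hxd : ‖x - c₀ • v₀‖ < ‖c₀‖ * ρ := by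
        simpa [dist_eq_norm] using hx
      rw [inv_mul_lt_iff₀ (by rw [hc₀]; linarith)]
      linarith [hxd]
    have hvW : c₀⁻¹ • x ∈ W := hrW (by simp [Metric.mem_ball, dist_eq_norm]; exact lt_of_lt_of_le hv (min_le_left _ _))
    have hvb : c₀⁻¹ • x ∈ Metric.ball v₀ (δ/ε) := by
      simp [Metric.mem_ball, dist_eq_norm]
      exact lt_of_lt_of_le hv (min_le_right _ _)
    have := key _ ⟨hvb, hvW⟩
    rwa [smul_inv_smul₀ hc₀ne] at this
  have hc₀V : c₀ • v₀ ∈ V := (hεW c₀ (by rw [hc₀]; linarith)).1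
  exact hf.eqOn_zero_of_preconnected_of_eventuallyEq_zero hVc.isPreconnected hc₀V hev
end
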